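/- arXiv:2507.06775 — 2 statements merged into one kernel-verified Lean document; each statement's English description precedes it below -/
import Mathlib

section
/- Let W ⊂ R^d be a finite nonempty set, S = (z_1,...,z_m) ∈ Z^m, and ℓ : R^d × Z → [0,B] be L-Lipschitz in its first argument. For every λ > 0, the empirical Rademacher complexity satisfies Rad_S(W) ≤ λB²/(2m) + (1/λ)·log PMag(λL·W), where Rad_S(W) = E_ε[ sup_{w∈W} (1/m) Σ_{i=1}^m ε_i ℓ(w,z_i) ] for i.i.d. Rademacher variables ε_i, and PMag(s·W) = Σ_{b∈W} max(γ_s(b),0) for any weighting γ_s : W → R satisfying Σ_{b∈W} e^{−s‖a−b‖} γ_s(b) = 1 for all a ∈ W. -/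
open Finset

set_option maxHeartbeats 1000000 in
/-- positive-magnitude bound on the empirical Rademacher complexity. -/
theorem stmt_1 {d : ℕ} {Z : Type*} {m : ℕ} (hm : 0 < m)
    (W : Finset (EuclideanSpace ℝ (Fin d))) (hW : W.Nonempty)
    (z : Fin m → Z) (B L lam : ℝ) (hB : 0 < B) (hL : 0 < L) (hlam : 0 < lam)
    (ℓ : EuclideanSpace ℝ (Fin d) → Z → ℝ)
    (hbdd : ∀ w zz, ℓ w zz ∈ Set.Icc (0 : ℝ) B)
    (hLip : ∀ (w w' : EuclideanSpace ℝ (Fin d)) (zz : Z),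
      |ℓ w zz - ℓ w' zz| ≤ L * dist w w')
    (γ : EuclideanSpace ℝ (Fin d) → ℝ)
    (hγ : ∀ a ∈ W, ∑ b ∈ W, Real.exp (-(lam * L) * dist a b) * γ b = 1) :
    ((2 : ℝ) ^ m)⁻¹ *
        ∑ ε : Fin m → Bool,
          W.sup' hW (fun w => (m : ℝ)⁻¹ * ∑ i, (if ε i then (1 : ℝ) else -1) * ℓ w (z i))
      ≤ lam * B ^ 2 / (2 * m) + lam⁻¹ * Real.log (∑ b ∈ W, max (γ b) 0) := by
  have hm' : (0:ℝ) < m := by exact_mod_cast hm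
  set s : Bool → ℝ := fun e => if e then (1:ℝ) else -1 with hs
  set X : (Fin m → Bool) → EuclideanSpace ℝ (Fin d) → ℝ :=
    fun ε w => (m : ℝ)⁻¹ * ∑ i, s (ε i) * ℓ w (z i) with hX
  set F : (Fin m → Bool) → ℝ := fun ε => W.sup' hW (X ε) with hF
  set P : ℝ := ∑ b ∈ W, max (γ b) 0 with hP
  -- P ≥ 1
  have hP1 : (1:ℝ) ≤ P := by
    obtain ⟨a, ha⟩ := hW
    calc (1:ℝ) = ∑ b ∈ W, Real.exp (-(lam * L) * dist a b) * γ b := (hγ a ha).symm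
      _ ≤ P := by
        apply Finset.sum_le_sum
        intro b hb
        have h1 : Real.exp (-(lam * L) * dist a b) ≤ 1 := by
          apply Real.exp_le_one_iff.mpr
          have : 0 ≤ lam * L := le_of_lt (mul_pos hlam hL)
          nlinarith [dist_nonneg (x := a) (y := b)]
        rcases le_or_gt (γ b) 0 with h | h
        · have : Real.exp (-(lam * L) * dist a b) * γ b ≤ 0 :=
            mul_nonpos_of_nonneg_of_nonpos (Real.exp_pos _).le h
          exact this.trans (le_max_right _ _)
        · calc Real.exp (-(lam * L) * dist a b) * γ b
              ≤ 1 * γ b := mul_le_mul_of_nonneg_right h1 h.le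
            _ = γ b := one_mul _
            _ ≤ max (γ b) 0 := le_max_left _ _
  have hPpos : (0:ℝ) < P := lt_of_lt_of_le one_pos hP1
  -- Lipschitz property of X ε
  have hXLip : ∀ ε a b, X ε a - X ε b ≤ L * dist a b := by
    intro ε a b
    have h1 : ∀ i : Fin m, s (ε i) * ℓ a (z i) - s (ε i) * ℓ b (z i) ≤ L * dist a b := by
      intro i
      have := hLip a b (z i)
      have habs : s (ε i) * (ℓ a (z i) - ℓ b (z i)) ≤ |ℓ a (z i) - ℓ b (z i)| := by
        rcases (ε i) with _ | _ <;> simp [hs] <;> cases abs_cases (ℓ a (z i) - ℓ b (z i)) <;> linarith [abs_nonneg (ℓ a (z i) - ℓ b (z i)), neg_abs_le (ℓ a (z i) - ℓ b (z i)), le_abs_self (ℓ a (z i) - ℓ b (z i))]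
      nlinarith [le_abs_self (ℓ a (z i) - ℓ b (z i))]
    have : X ε a - X ε b = (m:ℝ)⁻¹ * ∑ i, (s (ε i) * ℓ a (z i) - s (ε i) * ℓ b (z i)) := by
      rw [hX]; rw [Finset.sum_sub_distrib]; ring
    rw [this]
    have h2 : ∑ i : Fin m, (s (ε i) * ℓ a (z i) - s (ε i) * ℓ b (z i)) ≤ m * (L * dist a b) := by
      calc _ ≤ ∑ _i : Fin m, L * dist a b := Finset.sum_le_sum (fun i _ => h1 i)
        _ = m * (L * dist a b) := by simp [Finset.sum_const, nsmul_eq_mul]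
    calc (m:ℝ)⁻¹ * ∑ i : Fin m, (s (ε i) * ℓ a (z i) - s (ε i) * ℓ b (z i))
        ≤ (m:ℝ)⁻¹ * (m * (L * dist a b)) := by
          exact mul_le_mul_of_nonneg_left h2 (by positivity)
      _ = L * dist a b := by field_simp
  -- per-ε bound
  have hper : ∀ ε, Real.exp (lam * F ε) ≤ ∑ b ∈ W, max (γ b) 0 * Real.exp (lam * X ε b) := by
    intro ε
    obtain ⟨a, ha, hFa⟩ := Finset.exists_mem_eq_sup' hW (X ε)
    have hFe : F ε = X ε a := hFa
    rw [hFe]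
    calc Real.exp (lam * X ε a)
        = ∑ b ∈ W, Real.exp (-(lam * L) * dist a b) * γ b * Real.exp (lam * X ε a) := by
          rw [← Finset.sum_mul, hγ a ha, one_mul]
      _ ≤ ∑ b ∈ W, max (γ b) 0 * Real.exp (lam * X ε b) := by
          apply Finset.sum_le_sum
          intro b hb
          rcases le_or_gt (γ b) 0 with h | h
          · have hleft : Real.exp (-(lam * L) * dist a b) * γ b * Real.exp (lam * X ε a) ≤ 0 := by
              apply mul_nonpos_of_nonpos_of_nonneg
              · exact mul_nonpos_of_nonneg_of_nonpos (Real.exp_pos _).le h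
              · exact (Real.exp_pos _).le
            exact hleft.trans (by positivity)
          · have hmax : max (γ b) 0 = γ b := max_eq_left h.le
            rw [hmax]
            have key : Real.exp (-(lam * L) * dist a b) * Real.exp (lam * X ε a)
                ≤ Real.exp (lam * X ε b) := by
              rw [← Real.exp_add]
              apply Real.exp_le_exp.mpr
              have := hXLip ε a b
              nlinarith
            calc Real.exp (-(lam * L) * dist a b) * γ b * Real.exp (lam * X ε a)
                = γ b * (Real.exp (-(lam * L) * dist a b) * Real.exp (lam * X ε a)) := by ring
              _ ≤ γ b * Real.exp (lam * X ε b) := mul_le_mul_of_nonneg_left key h.le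
  -- MGF bound
  have hmgf : ∀ b ∈ W, ∑ ε : Fin m → Bool, Real.exp (lam * X ε b)
      ≤ 2 ^ m * Real.exp (lam ^ 2 * B ^ 2 / (2 * m)) := by
    intro b hb
    have hexp : ∀ ε : Fin m → Bool, Real.exp (lam * X ε b)
        = ∏ i, Real.exp (lam * (m:ℝ)⁻¹ * ℓ b (z i) * s (ε i)) := by
      intro ε
      rw [← Real.exp_sum]
      congr 1
      simp only [hX, Finset.mul_sum]
      exact Finset.sum_congr rfl (fun i _ => by ring)
    calc ∑ ε : Fin m → Bool, Real.exp (lam * X ε b)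
        = ∑ ε : Fin m → Bool, ∏ i, Real.exp (lam * (m:ℝ)⁻¹ * ℓ b (z i) * s (ε i)) :=
          Finset.sum_congr rfl (fun ε _ => hexp ε)
      _ = ∏ i : Fin m, ∑ e : Bool, Real.exp (lam * (m:ℝ)⁻¹ * ℓ b (z i) * s e) :=
          (Fintype.prod_sum (κ := fun _ : Fin m => Bool)
            (fun i e => Real.exp (lam * (m:ℝ)⁻¹ * ℓ b (z i) * s e))).symm
      _ ≤ ∏ i : Fin m, 2 * Real.exp (lam ^ 2 * B ^ 2 / (2 * m ^ 2)) := by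
          apply Finset.prod_le_prod
          · intro i _; positivity
          · intro i _
            set c : ℝ := lam * (m:ℝ)⁻¹ * ℓ b (z i) with hc
            have hsum : ∑ e : Bool, Real.exp (c * s e) = Real.exp c + Real.exp (-c) := by
              simp [hs, Fintype.sum_bool]
            rw [hsum]
            have hcosh : Real.exp c + Real.exp (-c) = 2 * Real.cosh c := by
              rw [Real.cosh_eq]; ring
            rw [hcosh]
            have h1 : Real.cosh c ≤ Real.exp (c ^ 2 / 2) := Real.cosh_le_exp_half_sq c
            have hcb : c ^ 2 ≤ lam ^ 2 * B ^ 2 / m ^ 2 := by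
              have h0 := (hbdd b (z i)).1
              have hB' := (hbdd b (z i)).2
              have h2 : ℓ b (z i) ^ 2 ≤ B ^ 2 := by nlinarith
              have hpos : (0:ℝ) ≤ lam ^ 2 * ((m:ℝ) ^ 2)⁻¹ := by positivity
              calc c ^ 2 = lam ^ 2 * ((m:ℝ) ^ 2)⁻¹ * ℓ b (z i) ^ 2 := by
                    rw [hc, mul_pow, mul_pow, inv_pow]
                _ ≤ lam ^ 2 * ((m:ℝ) ^ 2)⁻¹ * B ^ 2 := mul_le_mul_of_nonneg_left h2 hpos
                _ = lam ^ 2 * B ^ 2 / (m:ℝ) ^ 2 := by rw [div_eq_mul_inv]; ring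
            have h2 : Real.exp (c ^ 2 / 2) ≤ Real.exp (lam ^ 2 * B ^ 2 / (2 * m ^ 2)) := by
              apply Real.exp_le_exp.mpr
              have heq : lam ^ 2 * B ^ 2 / (2 * (m:ℝ) ^ 2) = (lam ^ 2 * B ^ 2 / (m:ℝ) ^ 2) / 2 := by
                ring
              rw [heq]
              linarith
            linarith [h1.trans h2]
      _ = 2 ^ m * Real.exp (lam ^ 2 * B ^ 2 / (2 * m)) := by
          rw [Finset.prod_const, Finset.card_univ, Fintype.card_fin, mul_pow,
            ← Real.exp_nat_mul]
          congr 2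
          field_simp
  -- Jensen
  have hcard : (Fintype.card (Fin m → Bool) : ℝ) = 2 ^ m := by
    simp [Fintype.card_fun]
  have hJ : Real.exp (lam * (((2:ℝ) ^ m)⁻¹ * ∑ ε : Fin m → Bool, F ε))
      ≤ ∑ ε : Fin m → Bool, ((2:ℝ) ^ m)⁻¹ * Real.exp (lam * F ε) := by
    have := convexOn_exp.map_sum_le (t := (Finset.univ : Finset (Fin m → Bool)))
      (w := fun _ => ((2:ℝ) ^ m)⁻¹) (p := fun ε => lam * F ε)
      (fun _ _ => by positivity)
      (by rw [Finset.sum_const, Finset.card_univ, nsmul_eq_mul]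
          rw [show (Fintype.card (Fin m → Bool) : ℝ) = 2 ^ m from hcard]
          field_simp)
      (fun _ _ => Set.mem_univ _)
    have heq : lam * (((2:ℝ) ^ m)⁻¹ * ∑ ε : Fin m → Bool, F ε)
        = ∑ ε : Fin m → Bool, ((2:ℝ) ^ m)⁻¹ • (lam * F ε) := by
      rw [Finset.mul_sum, Finset.mul_sum]
      exact Finset.sum_congr rfl (fun ε _ => by rw [smul_eq_mul]; ring)
    rw [heq]
    refine this.trans_eq ?_
    exact Finset.sum_congr rfl (fun ε _ => by rw [smul_eq_mul])
  -- combine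
  have hmain : Real.exp (lam * (((2:ℝ) ^ m)⁻¹ * ∑ ε : Fin m → Bool, F ε))
      ≤ P * Real.exp (lam ^ 2 * B ^ 2 / (2 * m)) := by
    calc Real.exp (lam * (((2:ℝ) ^ m)⁻¹ * ∑ ε : Fin m → Bool, F ε))
        ≤ ∑ ε : Fin m → Bool, ((2:ℝ) ^ m)⁻¹ * Real.exp (lam * F ε) := hJ
      _ ≤ ∑ ε : Fin m → Bool, ((2:ℝ) ^ m)⁻¹ *
            ∑ b ∈ W, max (γ b) 0 * Real.exp (lam * X ε b) := by
          apply Finset.sum_le_sum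
          intro ε _
          exact mul_le_mul_of_nonneg_left (hper ε) (by positivity)
      _ = ∑ b ∈ W, max (γ b) 0 * (((2:ℝ) ^ m)⁻¹ * ∑ ε : Fin m → Bool, Real.exp (lam * X ε b)) := by
          calc ∑ ε : Fin m → Bool, ((2:ℝ) ^ m)⁻¹ *
                  ∑ b ∈ W, max (γ b) 0 * Real.exp (lam * X ε b)
              = ∑ ε : Fin m → Bool, ∑ b ∈ W,
                  ((2:ℝ) ^ m)⁻¹ * (max (γ b) 0 * Real.exp (lam * X ε b)) :=
                Finset.sum_congr rfl (fun ε _ => Finset.mul_sum _ _ _)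
            _ = ∑ b ∈ W, ∑ ε : Fin m → Bool,
                  ((2:ℝ) ^ m)⁻¹ * (max (γ b) 0 * Real.exp (lam * X ε b)) := Finset.sum_comm
            _ = ∑ b ∈ W, max (γ b) 0 *
                  (((2:ℝ) ^ m)⁻¹ * ∑ ε : Fin m → Bool, Real.exp (lam * X ε b)) := by
                refine Finset.sum_congr rfl (fun b _ => ?_)
                rw [Finset.mul_sum, Finset.mul_sum]
                exact Finset.sum_congr rfl (fun ε _ => by ring)
      _ ≤ ∑ b ∈ W, max (γ b) 0 * Real.exp (lam ^ 2 * B ^ 2 / (2 * m)) := by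
          apply Finset.sum_le_sum
          intro b hb
          apply mul_le_mul_of_nonneg_left _ (le_max_right _ _)
          have := hmgf b hb
          calc ((2:ℝ) ^ m)⁻¹ * ∑ ε : Fin m → Bool, Real.exp (lam * X ε b)
              ≤ ((2:ℝ) ^ m)⁻¹ * (2 ^ m * Real.exp (lam ^ 2 * B ^ 2 / (2 * m))) :=
                mul_le_mul_of_nonneg_left this (by positivity)
            _ = Real.exp (lam ^ 2 * B ^ 2 / (2 * m)) := by field_simp
      _ = P * Real.exp (lam ^ 2 * B ^ 2 / (2 * m)) := by rw [hP, Finset.sum_mul]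
  -- conclude
  have hlog : lam * (((2:ℝ) ^ m)⁻¹ * ∑ ε : Fin m → Bool, F ε)
      ≤ Real.log P + lam ^ 2 * B ^ 2 / (2 * m) := by
    have := Real.log_le_log (Real.exp_pos _) hmain
    rwa [Real.log_exp, Real.log_mul (ne_of_gt hPpos) (ne_of_gt (Real.exp_pos _)),
      Real.log_exp] at this
  have hQ : (((2:ℝ) ^ m)⁻¹ * ∑ ε : Fin m → Bool, F ε)
      ≤ (Real.log P + lam ^ 2 * B ^ 2 / (2 * m)) / lam := by
    rw [le_div_iff₀ hlam]
    nlinarith [hlog]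
  calc ((2 : ℝ) ^ m)⁻¹ *
        ∑ ε : Fin m → Bool,
          W.sup' hW (fun w => (m : ℝ)⁻¹ * ∑ i, (if ε i then (1 : ℝ) else -1) * ℓ w (z i))
      = ((2:ℝ) ^ m)⁻¹ * ∑ ε : Fin m → Bool, F ε := rfl
    _ ≤ (Real.log P + lam ^ 2 * B ^ 2 / (2 * m)) / lam := hQ
    _ = lam * B ^ 2 / (2 * m) + lam⁻¹ * Real.log P := by
        field_simp
        ring
end

section
/- Let W ⊂ R^d be a finite set with a weighting γ_s (so Σ_{b∈W} e^{−s‖a−b‖}γ_s(b) = 1 for all a ∈ W), and let f : W → R satisfy |f(a) − f(b)| ≤ s‖a−b‖ for all a,b ∈ W. Then for every a ∈ W, exp(f(a)) ≤ Σ_{b∈W} exp(f(b)) · (γ_s(b))_+, and in particular max_{a∈W} exp(f(a)) ≤ Σ_{b∈W} exp(f(b)) (γ_s(b))_+. -/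
open Finset

/-- pointwise magnitude-weighting bound for Lipschitz functions. -/
theorem stmt_2 {d : ℕ} (W : Finset (EuclideanSpace ℝ (Fin d))) (hW : W.Nonempty)
    (s : ℝ) (hs : 0 < s) (γ : EuclideanSpace ℝ (Fin d) → ℝ)
    (hγ : ∀ a ∈ W, ∑ b ∈ W, Real.exp (-s * dist a b) * γ b = 1)
    (f : EuclideanSpace ℝ (Fin d) → ℝ)
    (hf : ∀ a ∈ W, ∀ b ∈ W, |f a - f b| ≤ s * dist a b) :
    (∀ a ∈ W, Real.exp (f a) ≤ ∑ b ∈ W, Real.exp (f b) * max (γ b) 0) ∧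
      W.sup' hW (fun a => Real.exp (f a)) ≤ ∑ b ∈ W, Real.exp (f b) * max (γ b) 0 := by
  have key : ∀ a ∈ W, Real.exp (f a) ≤ ∑ b ∈ W, Real.exp (f b) * max (γ b) 0 := by
    intro a ha
    have h1 : Real.exp (f a) = ∑ b ∈ W, Real.exp (f a) * (Real.exp (-s * dist a b) * γ b) := by
      rw [← Finset.mul_sum, hγ a ha, mul_one]
    rw [h1]
    apply Finset.sum_le_sum
    intro b hb
    rcases le_or_gt (γ b) 0 with h | h
    · have : Real.exp (f a) * (Real.exp (-s * dist a b) * γ b) ≤ 0 := by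
        apply mul_nonpos_of_nonneg_of_nonpos (Real.exp_pos _).le
        exact mul_nonpos_of_nonneg_of_nonpos (Real.exp_pos _).le h
      calc _ ≤ (0:ℝ) := this
        _ ≤ _ := mul_nonneg (Real.exp_pos _).le (le_max_right _ _)
    · have hmax : max (γ b) 0 = γ b := max_eq_left h.le
      rw [hmax, ← mul_assoc, ← Real.exp_add]
      apply mul_le_mul_of_nonneg_right _ h.le
      apply Real.exp_le_exp.2
      have := (abs_le.1 (hf a ha b hb)).2
      linarith
  refine ⟨key, ?_⟩
  apply Finset.sup'_le
  exact key
end
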